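/- Let f : M → N be a morphism in Preglid FR. Kernels and cokernels of f exist in Preglid FR, and for each object λ of oFF_Λ R (λ ∈ Λ⊔{∞}) there are canonical isomorphisms: (ker f)(λ) ≅ ker(f_λ); (coker f)(λ) ≅ im(N(λ) → coker(f_∞)), where N(λ) → coker(f_∞) is the composite of N(1_{λ,∞}) with the quotient map N(∞) → coker(f_∞); (im f)(λ) ≅ ker(N(λ) → coker(f_∞)); and (coim f)(λ) ≅ im(f_λ). Here im f := ker(N → coker f) and coim f := coker(ker f → M), computed in Preglid FR. -/

import Mathlib

/-!
Kernels in `Preglid FR` are computed pointwise, since a subfunctor of a preglider is again a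
preglider. Pointwise cokernels are not: `N(X)/f(M(X)) → N(∞)/f(M(∞))` need not be injective. Every
morphism of `oFF_Λ R` is also an endomorphism of `∞`, so `X ↦ coker f_∞` is a module on which all
the maps `1_{X,Y}` act as the identity; the image of `N` in it is a preglider, and it is the
cokernel of `f`: a morphism `t : N ⟶ T` with `f ≫ t = 0` vanishes on `x ∈ N(X)` whenever the
image of `x` in `N(∞)` lies in `f(M(∞))`, because `T(X) → T(∞)` is injective. The image
`ker (N ⟶ coker f)` is then pointwise `ker (N(X) → coker f_∞)`, and the coimage is the range of
`f`, because `ker f_X` is exactly the image of `(ker f)(X)`.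
-/

set_option linter.unusedSectionVars false
set_option maxHeartbeats 1000000
set_option synthInstance.maxHeartbeats 1000000
set_option maxHeartbeats 2000000

noncomputable section

open CategoryTheory CategoryTheory.Limits

universe u

namespace GliderPaper

/-- A `Γ`-filtration `FR` on a unital ring `R`: additive subgroups `F γ` with
`1 ∈ F 1`, monotone in `γ`, and multiplicative. -/
structure RingFiltration (Γ : Type u) [Group Γ] [PartialOrder Γ] (R : Type u) [Ring R] where
  F : Γ → AddSubgroup R
  one_mem : (1 : R) ∈ F 1
  mono : ∀ {α β : Γ}, α ≤ β → F α ≤ F β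
  mul_mem : ∀ {α β : Γ} {a b : R}, a ∈ F α → b ∈ F β → a * b ∈ F (α * β)

variable {Γ : Type u} [Group Γ] [PartialOrder Γ]
  [CovariantClass Γ Γ (· * ·) (· ≤ ·)] [CovariantClass Γ Γ (Function.swap (· * ·)) (· ≤ ·)]
  {R : Type u} [Ring R]

/-- Objects of the extended filtered companion category `oFF_Λ R`:
the disjoint union `Λ ⊔ {∞}`. -/
inductive OFF (FR : RingFiltration Γ R) (Λ : Set Γ) : Type u
  | of (α : Λ)
  | infty

/-- Objects of the filtered companion category `FF_Λ R`: the set `Λ`. -/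
inductive FF (FR : RingFiltration Γ R) (Λ : Set Γ) : Type u
  | of (α : Λ)

variable (FR : RingFiltration Γ R) (Λ : Set Γ)

namespace OFF

/-- `le X Y` holds iff the canonical morphism `1_{X,Y}` is defined, i.e. `X ≤ Y` in `Λ`,
or `Y = ∞`. -/
def le : OFF FR Λ → OFF FR Λ → Prop
  | of α, of β => (α : Γ) ≤ (β : Γ)
  | _, infty => True
  | infty, of _ => False

open scoped Classical in
/-- The additive subgroup of `R` of morphisms `X ⟶ Y` in `oFF_Λ R`:
`Hom(α,β) = F_{βα⁻¹}R` for `α ≤ β` in `Λ`, `Hom(X,∞) = R`, and `0` otherwise. -/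
noncomputable def homGrp : OFF FR Λ → OFF FR Λ → AddSubgroup R
  | of α, of β => if (α : Γ) ≤ (β : Γ) then FR.F ((β : Γ) * (α : Γ)⁻¹) else ⊥
  | _, infty => ⊤
  | infty, of _ => ⊥

theorem le_refl' : ∀ X : OFF FR Λ, le FR Λ X X
  | of _ => _root_.le_refl _
  | infty => trivial

theorem one_mem_homGrp : ∀ {X Y : OFF FR Λ}, le FR Λ X Y → (1 : R) ∈ homGrp FR Λ X Y
  | of α, of β, h => by
      have h' : (α : Γ) ≤ (β : Γ) := h
      have h1 : (1 : Γ) ≤ (β : Γ) * (α : Γ)⁻¹ := by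
        rw [← mul_inv_cancel (α : Γ)]
        exact mul_le_mul_left h' _
      simpa [homGrp, if_pos h'] using FR.mono h1 FR.one_mem
  | of _, infty, _ => trivial
  | infty, infty, _ => trivial
  | infty, of _, h => h.elim

theorem mul_mem_homGrp : ∀ {X Y Z : OFF FR Λ} {f g : R},
    f ∈ homGrp FR Λ X Y → g ∈ homGrp FR Λ Y Z → g * f ∈ homGrp FR Λ X Z := by
  intro X Y Z f g hf hg
  cases X <;> cases Y <;> cases Z <;> simp only [homGrp] at hf hg ⊢ <;> try trivial
  case of.of.of a b c =>
    by_cases hab : (a : Γ) ≤ (b : Γ)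
    · by_cases hbc : (b : Γ) ≤ (c : Γ)
      · rw [if_pos hab] at hf
        rw [if_pos hbc] at hg
        rw [if_pos (le_trans hab hbc)]
        have := FR.mul_mem hg hf
        rwa [show (c : Γ) * (b : Γ)⁻¹ * ((b : Γ) * (a : Γ)⁻¹) = (c : Γ) * (a : Γ)⁻¹ by
          group] at this
      · rw [if_neg hbc] at hg
        rw [AddSubgroup.mem_bot] at hg
        subst hg
        simp only [zero_mul]
        exact AddSubgroup.zero_mem _
    · rw [if_neg hab] at hf
      rw [AddSubgroup.mem_bot] at hf
      subst hf
      simp only [mul_zero]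
      exact AddSubgroup.zero_mem _
  case of.infty.of a c =>
    rw [AddSubgroup.mem_bot] at hg
    subst hg
    simp only [zero_mul]
    exact AddSubgroup.zero_mem _
  case infty.of.of b c =>
    rw [AddSubgroup.mem_bot] at hf
    subst hf
    simp only [mul_zero]
    exact AddSubgroup.zero_mem _
  case infty.infty.of c =>
    rw [AddSubgroup.mem_bot] at hg
    subst hg
    simp only [zero_mul]
    exact AddSubgroup.zero_mem _

instance : Category (OFF FR Λ) where
  Hom X Y := homGrp FR Λ X Y
  id X := ⟨1, one_mem_homGrp FR Λ (le_refl' FR Λ X)⟩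
  comp f g := ⟨g.1 * f.1, mul_mem_homGrp FR Λ f.2 g.2⟩
  id_comp f := Subtype.ext (mul_one f.1)
  comp_id f := Subtype.ext (one_mul f.1)
  assoc f g h := Subtype.ext (mul_assoc h.1 g.1 f.1).symm

instance : Preadditive (OFF FR Λ) where
  homGroup X Y := inferInstanceAs (AddCommGroup (homGrp FR Λ X Y))
  add_comp _ _ _ f f' g := Subtype.ext (mul_add g.1 f.1 f'.1)
  comp_add _ _ _ f g g' := Subtype.ext (add_mul g.1 g'.1 f.1)

end OFF

namespace FF

/-- The inclusion of the objects of `FF_Λ R` into those of `oFF_Λ R`. -/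
def toOFF : FF FR Λ → OFF FR Λ
  | of α => .of α

instance : Category (FF FR Λ) where
  Hom X Y := OFF.homGrp FR Λ (toOFF FR Λ X) (toOFF FR Λ Y)
  id X := ⟨1, OFF.one_mem_homGrp FR Λ (OFF.le_refl' FR Λ _)⟩
  comp f g := ⟨g.1 * f.1, OFF.mul_mem_homGrp FR Λ f.2 g.2⟩
  id_comp f := Subtype.ext (mul_one f.1)
  comp_id f := Subtype.ext (one_mul f.1)
  assoc f g h := Subtype.ext (mul_assoc h.1 g.1 f.1).symm

instance : Preadditive (FF FR Λ) where
  homGroup X Y := inferInstanceAs (AddCommGroup (OFF.homGrp FR Λ (toOFF FR Λ X) (toOFF FR Λ Y)))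
  add_comp _ _ _ f f' g := Subtype.ext (mul_add g.1 f.1 f'.1)
  comp_add _ _ _ f g g' := Subtype.ext (add_mul g.1 g'.1 f.1)

end FF

/-- The inclusion functor `j : FF_Λ R ⥤ oFF_Λ R`. -/
def jF : FF FR Λ ⥤ OFF FR Λ where
  obj := FF.toOFF FR Λ
  map f := f
  map_id _ := rfl
  map_comp _ _ := rfl

instance : (jF FR Λ).Additive := ⟨rfl⟩

/-- `Mod C`: the category of additive functors from `C` to abelian groups. -/
abbrev Mod (C : Type u) [Category.{u} C] [Preadditive C] : Type (u + 1) :=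
  C ⥤+ AddCommGrpCat.{u}

/-- The component at `X` of a morphism in `Mod C`. -/
def mapp {C : Type u} [Category.{u} C] [Preadditive C] {M N : Mod C} (f : M ⟶ N) (X : C) :
    M.obj.obj X ⟶ N.obj.obj X :=
  (show M.obj ⟶ N.obj from f.hom).app X

/-- The canonical morphism `1_{X,Y}` in `oFF_Λ R`, given by `1_R`. -/
def unitHom (X Y : OFF FR Λ) (h : OFF.le FR Λ X Y) : X ⟶ Y :=
  ⟨1, OFF.one_mem_homGrp FR Λ h⟩

/-- The canonical morphism `1_{α,β}` in `FF_Λ R`, given by `1_R`. -/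
def unitHomFF (α β : Λ) (h : (α : Γ) ≤ (β : Γ)) : (FF.of α : FF FR Λ) ⟶ FF.of β :=
  unitHom FR Λ (.of α) (.of β) h

/-- A module `M` over `oFF_Λ R` is a preglider if all the maps `M(1_{X,Y})` are injective. -/
def IsPreglider (M : Mod (OFF FR Λ)) : Prop :=
  ∀ (X Y : OFF FR Λ) (h : OFF.le FR Λ X Y), Function.Injective (M.obj.map (unitHom FR Λ X Y h))

/-- A module `M` over `FF_Λ R` is a prefragment if all the maps `M(1_{α,β})` are injective. -/
def IsPrefragment (M : Mod (FF FR Λ)) : Prop :=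
  ∀ (α β : Λ) (h : (α : Γ) ≤ (β : Γ)), Function.Injective (M.obj.map (unitHomFF FR Λ α β h))

/-- The category of pregliders: the full subcategory of `Mod (oFF_Λ R)` of pregliders. -/
abbrev Preglid : Type (u + 1) :=
  ObjectProperty.FullSubcategory (fun M : Mod (OFF FR Λ) => IsPreglider FR Λ M)

instance : Preadditive (Preglid FR Λ) := Preadditive.inducedCategory _

/-- The category of prefragments: the full subcategory of `Mod (FF_Λ R)` of prefragments. -/
abbrev Prefrag : Type (u + 1) :=
  ObjectProperty.FullSubcategory (fun M : Mod (FF FR Λ) => IsPrefragment FR Λ M)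

instance : Preadditive (Prefrag FR Λ) := Preadditive.inducedCategory _

/-- The inclusion `Preglid FR Λ ⥤ Mod (oFF_Λ R)`. -/
def iotaF : Preglid FR Λ ⥤ Mod (OFF FR Λ) := ObjectProperty.ι _

/-- The inclusion `Prefrag FR Λ ⥤ Mod (FF_Λ R)`. -/
def etaF : Prefrag FR Λ ⥤ Mod (FF FR Λ) := ObjectProperty.ι _

/-- The component at `X` of a morphism of pregliders. -/
def pgapp {M N : Preglid FR Λ} (f : M ⟶ N) (X : OFF FR Λ) :
    M.obj.obj.obj X ⟶ N.obj.obj.obj X :=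
  mapp (show M.obj ⟶ N.obj from f.hom) X

/-- The component at `X` of a morphism of prefragments. -/
def pfapp {M N : Prefrag FR Λ} (f : M ⟶ N) (X : FF FR Λ) :
    M.obj.obj.obj X ⟶ N.obj.obj.obj X :=
  mapp (show M.obj ⟶ N.obj from f.hom) X

/-- The class `Σ` of morphisms of pregliders all of whose components at objects of `Λ`
are isomorphisms. -/
def SigmaClass : MorphismProperty (Preglid FR Λ) :=
  fun _ _ f => ∀ α : Λ, IsIso (pgapp FR Λ f (.of α))

/-- The category of glider representations: the localization of `Preglid FR Λ` at `Σ`. -/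
abbrev Glid : Type (u + 1) := (SigmaClass FR Λ).Localization

/-- The localization functor `Q : Preglid FR Λ ⥤ Glid FR Λ`. -/
def QF : Preglid FR Λ ⥤ Glid FR Λ := (SigmaClass FR Λ).Q

/-- The restriction functor `j^* : Mod (oFF_Λ R) ⥤ Mod (FF_Λ R)`. -/
def jStar : Mod (OFF FR Λ) ⥤ Mod (FF FR Λ) where
  obj M := ⟨jF FR Λ ⋙ M.obj, by haveI : M.obj.Additive := M.property; exact (inferInstance : (jF FR Λ ⋙ M.obj).Additive)⟩
  map {M N} f := ⟨Functor.whiskerLeft (jF FR Λ) (show M.obj ⟶ N.obj from f.hom)⟩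
  map_id _ := rfl
  map_comp _ _ := rfl

theorem isPrefragment_jStar (M : Mod (OFF FR Λ)) (hM : IsPreglider FR Λ M) :
    IsPrefragment FR Λ ((jStar FR Λ).obj M) :=
  fun α β h => hM (.of α) (.of β) h

/-- The restriction functor `j^* : Preglid FR Λ ⥤ Prefrag FR Λ`. -/
def jRes : Preglid FR Λ ⥤ Prefrag FR Λ where
  obj M := ⟨(jStar FR Λ).obj M.obj, isPrefragment_jStar FR Λ M.obj M.property⟩
  map f := ⟨(jStar FR Λ).map f.hom⟩
  map_id M := by ext1; exact (jStar FR Λ).map_id M.obj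
  map_comp f g := by ext1; exact (jStar FR Λ).map_comp f.hom g.hom

theorem sigma_isInvertedBy : (SigmaClass FR Λ).IsInvertedBy (jRes FR Λ) := by
  intro M N f hf
  haveI : (AdditiveFunctor.forget (FF FR Λ) AddCommGrpCat.{u}).Faithful :=
    ObjectProperty.faithful_ι _
  haveI : ∀ X : FF FR Λ, IsIso
      (((ObjectProperty.ι (fun M : Mod (FF FR Λ) => IsPrefragment FR Λ M) ⋙
        AdditiveFunctor.forget _ _).map ((jRes FR Λ).map f)).app X) := by
    rintro ⟨α⟩
    exact hf α
  haveI : IsIso ((ObjectProperty.ι (fun M : Mod (FF FR Λ) => IsPrefragment FR Λ M) ⋙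
      AdditiveFunctor.forget _ _).map ((jRes FR Λ).map f)) :=
    NatIso.isIso_of_isIso_app _
  exact isIso_of_reflects_iso ((jRes FR Λ).map f)
    (ObjectProperty.ι (fun M : Mod (FF FR Λ) => IsPrefragment FR Λ M) ⋙
      AdditiveFunctor.forget _ _)

/-- The canonical fully faithful functor `φ : Glid FR Λ ⥤ Prefrag FR Λ`,
the unique functor with `Q ⋙ φ = j^*`. -/
def phiF : Glid FR Λ ⥤ Prefrag FR Λ :=
  Localization.Construction.lift (jRes FR Λ) (sigma_isInvertedBy FR Λ)

theorem phiF_fac : QF FR Λ ⋙ phiF FR Λ = jRes FR Λ :=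
  Localization.Construction.fac _ _


section Statements

variable {Γ : Type u} [Group Γ] [PartialOrder Γ]
  [CovariantClass Γ Γ (· * ·) (· ≤ ·)] [CovariantClass Γ Γ (Function.swap (· * ·)) (· ≤ ·)]
  {R : Type u} [Ring R]

/-- A morphism in `AddCommGrp`, viewed as an additive monoid homomorphism. -/
def toAddHom {A B : AddCommGrpCat.{u}} (f : A ⟶ B) : A →+ B := f.hom

theorem le_infty (FR : RingFiltration Γ R) (Λ : Set Γ) (X : OFF FR Λ) :
    OFF.le FR Λ X OFF.infty := by
  cases X <;> trivial

/-- The cokernel (in `AddCommGrp`) of the component `f_∞`. -/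
noncomputable def cokerInf (FR : RingFiltration Γ R) (Λ : Set Γ) {M N : Preglid FR Λ}
    (f : M ⟶ N) : AddCommGrpCat.{u} :=
  cokernel (pgapp FR Λ f OFF.infty)

/-- For `f : M ⟶ N` in `Preglid FR`, the composite `N(X) → N(∞) → coker (f_∞)` of the
structural map with the quotient map onto the cokernel of `f_∞`. -/
noncomputable def cmapTo (FR : RingFiltration Γ R) (Λ : Set Γ) {M N : Preglid FR Λ}
    (f : M ⟶ N) (X : OFF FR Λ) :
    N.obj.obj.obj X ⟶ cokerInf FR Λ f :=
  N.obj.obj.map (unitHom FR Λ X OFF.infty (le_infty FR Λ X)) ≫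
    cokernel.π (pgapp FR Λ f OFF.infty)

universe w

structure AddSubfunctor {C : Type*} [Category C] (F : C ⥤ AddCommGrpCat.{w}) where
  obj : ∀ X, AddSubgroup (F.obj X)
  map_mem : ∀ {X Y : C} (g : X ⟶ Y) {x : F.obj X}, x ∈ obj X → F.map g x ∈ obj Y

namespace AddSubfunctor

variable {C : Type*} [Category C] {F G T W : C ⥤ AddCommGrpCat.{w}} (S : AddSubfunctor F)

def toFunctor : C ⥤ AddCommGrpCat.{w} where
  obj X := AddCommGrpCat.of (S.obj X)
  map g := AddCommGrpCat.ofHom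
    (((F.map g).hom.comp (S.obj _).subtype).codRestrict _ fun x => S.map_mem g x.2)
  map_id X := by ext x; simp
  map_comp g h := by ext x; simp

instance [Preadditive C] [F.Additive] : S.toFunctor.Additive where
  map_add {_ _ g g'} := by
    ext x
    exact Subtype.ext (show F.map (g + g') x.1 = F.map g x.1 + F.map g' x.1 by simp)

theorem injective_map {X Y : C} {g : X ⟶ Y} (hg : Function.Injective (F.map g)) :
    Function.Injective (S.toFunctor.map g) :=
  fun _ _ hab => Subtype.ext (hg (congrArg Subtype.val hab))

def ι : S.toFunctor ⟶ F where
  app X := AddCommGrpCat.ofHom (S.obj X).subtype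

instance : Mono S.ι :=
  have (X : C) : Mono (S.ι.app X) :=
    (AddCommGrpCat.mono_iff_injective _).2 Subtype.val_injective
  NatTrans.mono_of_mono_app _

def lift (φ : W ⟶ F) (hφ : ∀ X x, φ.app X x ∈ S.obj X) : W ⟶ S.toFunctor where
  app X := AddCommGrpCat.ofHom ((φ.app X).hom.codRestrict _ (hφ X))
  naturality X Y g := by ext x; exact Subtype.ext (NatTrans.naturality_apply φ g x)

theorem lift_ι (φ : W ⟶ F) (hφ : ∀ X x, φ.app X x ∈ S.obj X) :
    S.lift φ hφ ≫ S.ι = φ :=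
  rfl

def ker (φ : F ⟶ G) : AddSubfunctor F where
  obj X := (φ.app X).hom.ker
  map_mem {_ _} g {x} hx := by
    rw [AddMonoidHom.mem_ker] at hx ⊢
    rw [NatTrans.naturality_apply, hx, map_zero]

def range (φ : F ⟶ G) : AddSubfunctor G where
  obj X := (φ.app X).hom.range
  map_mem {_ _} g := by
    rintro _ ⟨x, rfl⟩
    exact ⟨F.map g x, NatTrans.naturality_apply φ g x⟩

theorem app_mem_ker {ψ : W ⟶ F} {φ : F ⟶ G} (h : ψ ≫ φ = 0) (X : C) (x : W.obj X) :
    ψ.app X x ∈ (ker φ).obj X :=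
  ConcreteCategory.congr_hom (NatTrans.congr_app h X) x

def rangeRestrict (φ : F ⟶ G) : F ⟶ (range φ).toFunctor :=
  (range φ).lift φ fun _ x => ⟨x, rfl⟩

theorem ker_rangeRestrict (φ : F ⟶ G) (X : C) :
    (ker (rangeRestrict φ)).obj X = (ker φ).obj X :=
  AddMonoidHom.ker_codRestrict _ _ _

theorem rangeRestrict_app_surjective (φ : F ⟶ G) (X : C) :
    Function.Surjective ((rangeRestrict φ).app X) :=
  fun ⟨_, x, hx⟩ => ⟨x, Subtype.ext hx⟩

instance (φ : F ⟶ G) : Epi (rangeRestrict φ) :=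
  have (X : C) : Epi ((rangeRestrict φ).app X) :=
    (AddCommGrpCat.epi_iff_surjective _).2 (rangeRestrict_app_surjective φ X)
  NatTrans.epi_of_epi_app _

section rangeDesc

variable (φ : F ⟶ G) (ψ : F ⟶ T) (h : ∀ X, (ker φ).obj X ≤ (ker ψ).obj X)

def rangeDescApp (X : C) : (range φ).toFunctor.obj X ⟶ T.obj X :=
  AddCommGrpCat.ofHom <| ((rangeRestrict φ).app X).hom.liftOfSurjective
    (rangeRestrict_app_surjective φ X)
    ⟨(ψ.app X).hom, (ker_rangeRestrict φ X).trans_le (h X)⟩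

theorem rangeRestrict_app_rangeDescApp (X : C) :
    (rangeRestrict φ).app X ≫ rangeDescApp φ ψ h X = ψ.app X := by
  ext x
  exact AddMonoidHom.liftOfRightInverse_comp_apply _ _ (Function.rightInverse_surjInv _) _ x

def rangeDesc : (range φ).toFunctor ⟶ T where
  app := rangeDescApp φ ψ h
  naturality X Y g := by
    rw [← cancel_epi ((rangeRestrict φ).app X), ← NatTrans.naturality_assoc,
      rangeRestrict_app_rangeDescApp, ← Category.assoc, rangeRestrict_app_rangeDescApp,
      ψ.naturality]

theorem rangeRestrict_rangeDesc : rangeRestrict φ ≫ rangeDesc φ ψ h = ψ :=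
  NatTrans.ext (funext (rangeRestrict_app_rangeDescApp φ ψ h))

end rangeDesc

end AddSubfunctor

section pointwiseCokernel

variable {C D : Type*} [Category C] [Category D] [Preadditive D] [HasCokernels D] {F G : C ⥤ D}

def pointwiseCokernel (φ : F ⟶ G) : C ⥤ D where
  obj X := cokernel (φ.app X)
  map g := cokernel.map _ _ (F.map g) (G.map g) (φ.naturality g).symm
  map_id X := by ext; simp
  map_comp g h := by ext; simp

def toPointwiseCokernel (φ : F ⟶ G) : G ⟶ pointwiseCokernel φ where
  app X := cokernel.π (φ.app X)
  naturality _ _ _ := (cokernel.π_desc _ _ _).symm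

instance [Preadditive C] [F.Additive] [G.Additive] (φ : F ⟶ G) :
    (pointwiseCokernel φ).Additive where
  map_add {X Y g g'} := by
    refine (cancel_epi (cokernel.π (φ.app X))).1
      ((Eq.trans ?_ (Preadditive.comp_add _ _ _ _ _ _).symm))
    simp [pointwiseCokernel]
    rfl

end pointwiseCokernel

theorem AddCommGrpCat.mem_range_of_cokernel_π_eq_zero {A B : AddCommGrpCat.{w}} (t : A ⟶ B)
    {x : B} (hx : cokernel.π t x = 0) : x ∈ t.hom.range :=
  (ShortComplex.ab_exact_iff _).1
    (ShortComplex.exact_of_g_is_cokernel (.mk t (cokernel.π t) (cokernel.condition t))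
      (cokernelIsCokernel t)) x hx

namespace OFF

variable {FR : RingFiltration Γ R} {Λ : Set Γ}

variable (FR Λ) in
def collapseToInfty : OFF FR Λ ⥤ OFF FR Λ where
  obj _ := infty
  map g := ⟨g.1, AddSubgroup.mem_top _⟩
  map_id _ := rfl
  map_comp _ _ := rfl

instance : (collapseToInfty FR Λ).Additive where
  map_add := rfl

variable (FR Λ) in
def toCollapseToInfty : 𝟭 (OFF FR Λ) ⟶ collapseToInfty FR Λ where
  app X := unitHom FR Λ X infty (le_infty FR Λ X)
  naturality _ _ g := Subtype.ext ((one_mul g.1).trans (mul_one g.1).symm)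

end OFF

namespace Preglid

variable {FR : RingFiltration Γ R} {Λ : Set Γ} {M N : Preglid FR Λ}

def homMk (φ : M.obj.obj ⟶ N.obj.obj) : M ⟶ N := ⟨⟨φ⟩⟩

theorem hom_ext {f g : M ⟶ N} (h : f.hom.hom = g.hom.hom) : f = g :=
  ObjectProperty.hom_ext _ (ObjectProperty.hom_ext _ h)

theorem comp_eq_zero_iff {L : Preglid FR Λ} (f : L ⟶ M) (g : M ⟶ N) :
    f ≫ g = 0 ↔ f.hom.hom ≫ g.hom.hom = 0 :=
  ⟨congrArg fun t : L ⟶ N => t.hom.hom, fun h => hom_ext h⟩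

def ofAddSubfunctor (M : Preglid FR Λ) (S : AddSubfunctor M.obj.obj) : Preglid FR Λ :=
  ⟨AdditiveFunctor.of S.toFunctor, fun X Y h => S.injective_map (M.property X Y h)⟩

def kernel (f : M ⟶ N) : Preglid FR Λ := ofAddSubfunctor M (AddSubfunctor.ker f.hom.hom)

def kernelι (f : M ⟶ N) : kernel f ⟶ M := homMk (AddSubfunctor.ker f.hom.hom).ι

theorem kernelι_comp (f : M ⟶ N) : kernelι f ≫ f = 0 :=
  hom_ext (NatTrans.ext (funext fun _ => AddCommGrpCat.ext fun x => x.2))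

def kernelIsLimit (f : M ⟶ N) : IsLimit (KernelFork.ofι (kernelι f) (kernelι_comp f)) :=
  KernelFork.IsLimit.ofι _ _
    (fun k hk => homMk ((AddSubfunctor.ker f.hom.hom).lift k.hom.hom
      (AddSubfunctor.app_mem_ker ((comp_eq_zero_iff k f).1 hk))))
    (fun _ _ => hom_ext (AddSubfunctor.lift_ι _ _ _))
    (fun _ _ _ hm => hom_ext ((cancel_mono (AddSubfunctor.ker f.hom.hom).ι).1
      (congrArg (fun t => t.hom.hom) hm)))

def range (f : M ⟶ N) : Preglid FR Λ := ofAddSubfunctor N (AddSubfunctor.range f.hom.hom)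

def rangeπ (f : M ⟶ N) : M ⟶ range f := homMk (AddSubfunctor.rangeRestrict f.hom.hom)

theorem comp_rangeπ_eq_zero {K : Preglid FR Λ} {k : K ⟶ M} {f : M ⟶ N} (h : k ≫ f = 0) :
    k ≫ rangeπ f = 0 :=
  hom_ext <| (cancel_mono (AddSubfunctor.range f.hom.hom).ι).1 <|
    (Category.assoc _ _ _).trans (((comp_eq_zero_iff k f).1 h).trans zero_comp.symm)

def rangeIsColimit {K : Preglid FR Λ} (k : K ⟶ M) (f : M ⟶ N) (hkf : k ≫ f = 0)
    (hf : ∀ {T : Preglid FR Λ} (t : M ⟶ T), k ≫ t = 0 → ∀ X,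
      (AddSubfunctor.ker f.hom.hom).obj X ≤ (AddSubfunctor.ker t.hom.hom).obj X) :
    IsColimit (CokernelCofork.ofπ (rangeπ f) (comp_rangeπ_eq_zero hkf)) :=
  CokernelCofork.IsColimit.ofπ _ _
    (fun t ht => homMk (AddSubfunctor.rangeDesc f.hom.hom t.hom.hom (hf t ht)))
    (fun _ _ => hom_ext (AddSubfunctor.rangeRestrict_rangeDesc _ _ _))
    (fun _ _ _ hm => hom_ext ((cancel_epi (AddSubfunctor.rangeRestrict f.hom.hom)).1 <|
      (congrArg (fun t => t.hom.hom) hm).trans (AddSubfunctor.rangeRestrict_rangeDesc _ _ _).symm))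

/-- `X ↦ coker f_∞`; unlike the pointwise cokernel of `f`, it is a preglider. -/
def cokernelAtInfty (f : M ⟶ N) : Preglid FR Λ :=
  ⟨AdditiveFunctor.of (OFF.collapseToInfty FR Λ ⋙ pointwiseCokernel f.hom.hom), fun X Y h => by
    change Function.Injective ((pointwiseCokernel f.hom.hom).map (𝟙 OFF.infty))
    rw [CategoryTheory.Functor.map_id]
    exact Function.injective_id⟩

def toCokernelAtInfty (f : M ⟶ N) : N ⟶ cokernelAtInfty f :=
  homMk (Functor.whiskerRight (OFF.toCollapseToInfty FR Λ) N.obj.obj ≫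
    Functor.whiskerLeft (OFF.collapseToInfty FR Λ) (toPointwiseCokernel f.hom.hom))

theorem comp_toCokernelAtInfty (f : M ⟶ N) : f ≫ toCokernelAtInfty f = 0 :=
  hom_ext <| NatTrans.ext <| funext fun X => by
    show f.hom.hom.app X ≫ N.obj.obj.map (unitHom FR Λ X OFF.infty (le_infty FR Λ X)) ≫
      cokernel.π (f.hom.hom.app OFF.infty) = 0
    rw [← NatTrans.naturality_assoc, cokernel.condition, comp_zero]

theorem ker_toCokernelAtInfty_le_ker (f : M ⟶ N) {T : Preglid FR Λ} (t : N ⟶ T)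
    (ht : f ≫ t = 0) (X : OFF FR Λ) :
    (AddSubfunctor.ker (toCokernelAtInfty f).hom.hom).obj X ≤
      (AddSubfunctor.ker t.hom.hom).obj X := by
  intro x hx
  set u := unitHom FR Λ X OFF.infty (le_infty FR Λ X)
  obtain ⟨m, hm⟩ := AddCommGrpCat.mem_range_of_cokernel_π_eq_zero (f.hom.hom.app OFF.infty)
    (x := N.obj.obj.map u x) hx
  have htx : T.obj.obj.map u (t.hom.hom.app X x) = 0 := by
    rw [← NatTrans.naturality_apply, ← hm]
    exact AddSubfunctor.app_mem_ker ((comp_eq_zero_iff f t).1 ht) _ m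
  exact T.property X OFF.infty (le_infty FR Λ X) (htx.trans (map_zero _).symm)

theorem ker_le_ker_of_kernelι_comp_eq_zero (f : M ⟶ N) {T : Preglid FR Λ} (t : M ⟶ T)
    (ht : kernelι f ≫ t = 0) (X : OFF FR Λ) :
    (AddSubfunctor.ker f.hom.hom).obj X ≤ (AddSubfunctor.ker t.hom.hom).obj X :=
  fun x hx => AddSubfunctor.app_mem_ker ((comp_eq_zero_iff _ _).1 ht) X ⟨x, hx⟩

end Preglid

/-- Let `f : M ⟶ N` be a morphism in `Preglid FR`.  Kernels and
cokernels of `f` exist in `Preglid FR`, and for each object `X` of `oFF_Λ R` there are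
canonical isomorphisms `(ker f)(X) ≅ ker (f_X)`,
`(coker f)(X) ≅ im (N(X) → coker (f_∞))`, `(im f)(X) ≅ ker (N(X) → coker (f_∞))` and
`(coim f)(X) ≅ im (f_X)`, where `im f = ker (N → coker f)` and
`coim f = coker (ker f → M)` are computed in `Preglid FR`.  Canonicity is expressed by
compatibility of each isomorphism with the structural maps. -/
theorem statement_11 (FR : RingFiltration Γ R) (Λ : Set Γ)
    (M N : Preglid FR Λ) (f : M ⟶ N) :
    -- a kernel of `f` exists ...
    ∃ (K : Preglid FR Λ) (ki : K ⟶ M) (wk : ki ≫ f = 0),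
      Nonempty (IsLimit (KernelFork.ofι ki wk)) ∧
      -- ... with `(ker f)(X) ≅ ker (f_X)` canonically
      (∀ X : OFF FR Λ,
        ∃ e : K.obj.obj.obj X ≃+ AddMonoidHom.ker (toAddHom (pgapp FR Λ f X)),
          ∀ x, ((e x : AddMonoidHom.ker (toAddHom (pgapp FR Λ f X))) : M.obj.obj.obj X)
            = pgapp FR Λ ki X x) ∧
      -- a cokernel of `f` exists ...
      ∃ (Cq : Preglid FR Λ) (qp : N ⟶ Cq) (wq : f ≫ qp = 0),
        Nonempty (IsColimit (CokernelCofork.ofπ qp wq)) ∧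
        -- ... with `(coker f)(X) ≅ im (N(X) → coker (f_∞))`, compatibly with `π`
        (∀ X : OFF FR Λ,
          ∃ e : Cq.obj.obj.obj X ≃+ AddMonoidHom.range (toAddHom (cmapTo FR Λ f X)),
            ∀ y : N.obj.obj.obj X,
              ((e (pgapp FR Λ qp X y) :
                  AddMonoidHom.range (toAddHom (cmapTo FR Λ f X))) :
                cokerInf FR Λ f) = cmapTo FR Λ f X y) ∧
        -- the image `im f = ker (N → coker f)` exists ...
        (∃ (I : Preglid FR Λ) (ii : I ⟶ N) (wi : ii ≫ qp = 0),
          Nonempty (IsLimit (KernelFork.ofι ii wi)) ∧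
          -- ... with `(im f)(X) ≅ ker (N(X) → coker (f_∞))`
          ∀ X : OFF FR Λ,
            ∃ e : I.obj.obj.obj X ≃+ AddMonoidHom.ker (toAddHom (cmapTo FR Λ f X)),
              ∀ x, ((e x : AddMonoidHom.ker (toAddHom (cmapTo FR Λ f X))) :
                  N.obj.obj.obj X) = pgapp FR Λ ii X x) ∧
        -- the coimage `coim f = coker (ker f → M)` exists ...
        (∃ (J : Preglid FR Λ) (cp : M ⟶ J) (wc : ki ≫ cp = 0),
          Nonempty (IsColimit (CokernelCofork.ofπ cp wc)) ∧
          -- ... with `(coim f)(X) ≅ im (f_X)`, compatibly with `π`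
          ∀ X : OFF FR Λ,
            ∃ e : J.obj.obj.obj X ≃+ AddMonoidHom.range (toAddHom (pgapp FR Λ f X)),
              ∀ x : M.obj.obj.obj X,
                ((e (pgapp FR Λ cp X x) :
                    AddMonoidHom.range (toAddHom (pgapp FR Λ f X))) : N.obj.obj.obj X)
                  = pgapp FR Λ f X x) := by
  have hν := Preglid.comp_toCokernelAtInfty f
  exact
    ⟨Preglid.kernel f, Preglid.kernelι f, Preglid.kernelι_comp f, ⟨Preglid.kernelIsLimit f⟩,
      fun X => ⟨AddEquiv.refl _, fun _ => rfl⟩,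
      Preglid.range (Preglid.toCokernelAtInfty f), Preglid.rangeπ _,
      Preglid.comp_rangeπ_eq_zero hν,
      ⟨Preglid.rangeIsColimit _ _ hν (Preglid.ker_toCokernelAtInfty_le_ker f)⟩,
      fun X => ⟨AddEquiv.refl _, fun _ => rfl⟩,
      ⟨Preglid.kernel (Preglid.rangeπ _), Preglid.kernelι _, Preglid.kernelι_comp _,
        ⟨Preglid.kernelIsLimit _⟩,
        fun X =>
          ⟨AddEquiv.addSubgroupCongr (AddSubfunctor.ker_rangeRestrict _ X), fun _ => rfl⟩⟩,
      ⟨Preglid.range f, Preglid.rangeπ f, Preglid.comp_rangeπ_eq_zero (Preglid.kernelι_comp f),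
        ⟨Preglid.rangeIsColimit _ _ (Preglid.kernelι_comp f)
          (Preglid.ker_le_ker_of_kernelι_comp_eq_zero f)⟩,
        fun X => ⟨AddEquiv.refl _, fun _ => rfl⟩⟩⟩

end Statements

end GliderPaper
end
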